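/- Let Θ ⊆ Δ and let I be a Θ-ideal in Φ⁺. If Q and Q' are two W-invariant elements of Sym²(V) whose associated symmetric bilinear forms on V are nondegenerate, then the ideals of R^{W_Θ} defined by them coincide: {ψ(Q) : ψ ∈ D(A_I)^{W_Θ}} = {ψ(Q') : ψ ∈ D(A_I)^{W_Θ}}; i.e., the ideal a(I)_Θ does not depend on the choice of W-invariant nondegenerate quadratic form Q. -/

import Mathlib

open scoped Classical

noncomputable section

variable (V : Type) [AddCommGroup V] [Module ℚ V]

/-- A finite reduced crystallographic root system `Φ` spanning the `ℚ`-vector space `V`,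
together with a fixed system of positive roots `Pos`, the corresponding set of simple
roots `Δ`, the coroots `coroot α` (so that the reflection associated to `α` is
`x ↦ x - coroot α x • α`), and `coeff α δ`, the (unique, by linear independence of `Δ`)
nonnegative integral coefficient of the simple root `δ` in the expression of the
positive root `α` as a combination of simple roots. -/
structure RootSystemData where
  Φ : Finset V
  Pos : Finset V
  Δ : Finset V
  coeff : V → V → ℕ
  coroot : V → V →ₗ[ℚ] ℚ
  span_eq_top : Submodule.span ℚ (Φ : Set V) = ⊤
  root_ne_zero : ∀ α ∈ Φ, α ≠ (0 : V)
  reduced : ∀ α ∈ Φ, ∀ c : ℚ, c • α ∈ Φ → c = 1 ∨ c = -1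
  coroot_self : ∀ α ∈ Φ, coroot α α = 2
  reflect_mem : ∀ α ∈ Φ, ∀ β ∈ Φ, β - coroot α β • α ∈ Φ
  crystallographic : ∀ α ∈ Φ, ∀ β ∈ Φ, ∃ n : ℤ, coroot α β = (n : ℚ)
  pos_subset : Pos ⊆ Φ
  pos_or_neg : ∀ α ∈ Φ, α ∈ Pos ∨ -α ∈ Pos
  pos_not_neg : ∀ α ∈ Pos, -α ∉ Pos
  simple_subset : Δ ⊆ Pos
  simple_indep : LinearIndependent ℚ (fun δ : (Δ : Set V) => (δ : V))
  pos_combo : ∀ α ∈ Pos, α = ∑ δ ∈ Δ, (coeff α δ : ℚ) • δ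

variable {V}

/-- `I` is a lower ideal in the set `Pos` of positive roots. -/
def IsLowerIdealOf (Pos I : Finset V) : Prop :=
  I ⊆ Pos ∧ ∀ α ∈ I, ∀ β ∈ Pos, α - β ∈ Pos → α - β ∈ I

/-- `Φ⁺_Θ`: the positive roots that are `ℤ`-linear combinations of roots in `Θ`. -/
def posThetaOf (Pos Θ : Finset V) : Finset V :=
  Pos.filter fun α => ∃ c : V → ℤ, α = ∑ δ ∈ Θ, (c δ : ℚ) • δ

/-- `I` is an upper ideal with respect to `Θ`. -/
def IsUpperIdealWrt (Pos Θ I : Finset V) : Prop :=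
  ∀ α ∈ I, ∀ β ∈ posThetaOf Pos Θ, α + β ∈ Pos → α + β ∈ I

/-- `I` is a `Θ`-ideal. -/
def IsThetaIdealOf (Pos Θ I : Finset V) : Prop :=
  IsLowerIdealOf Pos I ∧ IsUpperIdealWrt Pos Θ I ∧ posThetaOf Pos Θ ⊆ I

/-- The partial order `α ≼_Θ β`: `β - α` is a (possibly empty) sum of
positive roots belonging to `Φ⁺_Θ`. -/
def leTheta (Pos Θ : Finset V) (α β : V) : Prop :=
  ∃ m : Multiset V, (∀ γ ∈ m, γ ∈ posThetaOf Pos Θ) ∧ β - α = m.sum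

/-- `Y` is a Weyl type subset of the lower ideal `I`. -/
def IsWeylType (I Y : Finset V) : Prop :=
  Y ⊆ I ∧ (∀ α ∈ Y, ∀ β ∈ Y, α + β ∈ I → α + β ∈ Y) ∧
    ∀ γ ∈ I, ∀ δ ∈ I, γ ∉ Y → δ ∉ Y → γ + δ ∈ I → γ + δ ∉ Y

/-- `g` is the reflection `s_α` associated to the root `α`. -/
def IsReflectionOf (D : RootSystemData V) (α : V) (g : V ≃ₗ[ℚ] V) : Prop :=
  ∀ x, g x = x - D.coroot α x • α

/-- The Weyl group `W`, generated by the reflections `s_α` for `α ∈ Φ`. -/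
def WeylGroup (D : RootSystemData V) : Subgroup (V ≃ₗ[ℚ] V) :=
  Subgroup.closure {g | ∃ α ∈ D.Φ, IsReflectionOf D α g}

/-- The parabolic subgroup `W_Θ` generated by the reflections `s_α` for `α ∈ Θ`. -/
def WThetaGroup (D : RootSystemData V) (Θ : Finset V) : Subgroup (V ≃ₗ[ℚ] V) :=
  Subgroup.closure {g | ∃ α ∈ Θ, IsReflectionOf D α g}

/-- The length `ℓ(w)`: the smallest number of simple reflections needed to write `w`. -/
noncomputable def len (D : RootSystemData V) (w : V ≃ₗ[ℚ] V) : ℕ :=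
  sInf {p : ℕ | ∃ l : List (V ≃ₗ[ℚ] V), l.length = p ∧
    (∀ g ∈ l, ∃ α ∈ D.Δ, IsReflectionOf D α g) ∧ l.prod = w}

/-- `N(w) = {α ∈ Φ⁺ : w(α) ∈ Φ⁻}` (where `Φ⁻ = -Φ⁺`). -/
def negSet (D : RootSystemData V) (w : V ≃ₗ[ℚ] V) : Finset V :=
  D.Pos.filter fun α => -(w α) ∈ D.Pos

/-- `W^Θ`, the set of minimal length left coset representatives:
`{w ∈ W : ℓ(w) < ℓ(w s_α) for all α ∈ Θ}`. -/
def minCosetReps (D : RootSystemData V) (Θ : Finset V) : Set (V ≃ₗ[ℚ] V) :=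
  {w | w ∈ WeylGroup D ∧ ∀ g : V ≃ₗ[ℚ] V,
    (∃ α ∈ Θ, IsReflectionOf D α g) → len D w < len D (w * g)}

/-- The height `ht(α)` of a positive root: the sum of its coefficients over the simple roots. -/
def rootHt (D : RootSystemData V) (α : V) : ℕ := ∑ δ ∈ D.Δ, D.coeff α δ


variable {V : Type} [AddCommGroup V] [Module ℚ V] {κ : Type}

/-- The embedding of `V` as the degree-one part of the symmetric algebra
`R = Sym(V)`, realized as the polynomial ring `ℚ[X_i : i ∈ κ]` on a basis of `V`. -/
noncomputable def embR (bV : Module.Basis κ ℚ V) : V →ₗ[ℚ] MvPolynomial κ ℚ :=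
  (Finsupp.linearCombination ℚ (MvPolynomial.X : κ → MvPolynomial κ ℚ)).comp
    bV.repr.toLinearMap

/-- The algebra endomorphism of `R = Sym(V)` extending a linear automorphism `w` of `V`. -/
noncomputable def liftW (bV : Module.Basis κ ℚ V) (w : V ≃ₗ[ℚ] V) :
    MvPolynomial κ ℚ →ₐ[ℚ] MvPolynomial κ ℚ :=
  MvPolynomial.aeval fun i => embR bV (w (bV i))

/-- `ψ : R → R` is a `ℚ`-linear derivation of `R`. -/
def IsDerivFn (ψ : MvPolynomial κ ℚ → MvPolynomial κ ℚ) : Prop :=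
  IsLinearMap ℚ ψ ∧ ∀ f g, ψ (f * g) = ψ f * g + f * ψ g

/-- `ψ` belongs to the logarithmic derivation module `D(A_I)` of the ideal
arrangement `A_I`: it is a derivation of `R` with `ψ(α) ∈ Rα` for all `α ∈ I`. -/
def InLogDer (bV : Module.Basis κ ℚ V) (I : Finset V)
    (ψ : MvPolynomial κ ℚ → MvPolynomial κ ℚ) : Prop :=
  IsDerivFn ψ ∧ ∀ α ∈ I, ∃ r : MvPolynomial κ ℚ, ψ (embR bV α) = r * embR bV α

/-- The action of `w` on derivations: `(w·ψ)(f) = w(ψ(w⁻¹ f))`. -/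
noncomputable def actDer (bV : Module.Basis κ ℚ V) (w : V ≃ₗ[ℚ] V)
    (ψ : MvPolynomial κ ℚ → MvPolynomial κ ℚ) :
    MvPolynomial κ ℚ → MvPolynomial κ ℚ :=
  fun f => liftW bV w (ψ (liftW bV w⁻¹ f))

/-- The quadratic form on `V` associated to a polynomial `Q ∈ R`, by evaluation in the
coordinates of the given basis. -/
noncomputable def polyQuadForm (bV : Module.Basis κ ℚ V) (Q : MvPolynomial κ ℚ) (v : V) : ℚ :=
  MvPolynomial.eval (fun i => bV.repr v i) Q

/-- The symmetric bilinear form associated to the quadratic form of `Q` is nondegenerate. -/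
def NondegQuad (bV : Module.Basis κ ℚ V) (Q : MvPolynomial κ ℚ) : Prop :=
  ∀ v : V, (∀ u : V,
    polyQuadForm bV Q (v + u) - polyQuadForm bV Q v - polyQuadForm bV Q u = 0) → v = 0

/-! In coordinates a `W`-invariant quadratic form `Q` is `x ↦ ½ xᵀ H_Q x`, where the Hessian `H_Q`
is symmetric, and invariance under `w ∈ W` with matrix `M` reads `M H_Q Mᵀ = H_Q`. If `Q'` is
nondegenerate, then `T = H_Q H_{Q'}⁻¹` is therefore a `W`-equivariant endomorphism of `V`; commuting
with each reflection `s_α`, it maps every root to a multiple of itself. So the derivation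
`ψ ∘ T` (sending `v ∈ V` to `ψ (T v)`) lies in `D(A_I)^{W_Θ}` whenever `ψ` does, and
`T H_{Q'} = H_Q` gives `(ψ ∘ T)(Q') = ψ(Q)`. Exchanging `Q` and `Q'` gives the other inclusion. -/

open Matrix

namespace MvPolynomial

variable {σ R : Type*} [CommRing R]

theorem pderiv_pderiv_comm (i j : σ) (f : MvPolynomial σ R) :
    pderiv i (pderiv j f) = pderiv j (pderiv i f) := by
  have h : ⁅(pderiv i : Derivation R (MvPolynomial σ R) (MvPolynomial σ R)),
      (pderiv j : Derivation R (MvPolynomial σ R) (MvPolynomial σ R))⁆ = 0 :=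
    derivation_ext fun k => by
      simp [Derivation.commutator_apply, pderiv_X, Pi.single_apply, apply_ite]
  simpa [Derivation.commutator_apply, sub_eq_zero] using congr($h f)

def hessian (f : MvPolynomial σ R) : Matrix σ σ R :=
  Matrix.of fun j k => constantCoeff (pderiv k (pderiv j f))

theorem hessian_isSymm (f : MvPolynomial σ R) : (hessian f).IsSymm := by
  ext j k
  simp [hessian, pderiv_pderiv_comm]

variable [Fintype σ]

theorem derivation_eq_sum_mul_pderiv (D : Derivation R (MvPolynomial σ R) (MvPolynomial σ R))
    (f : MvPolynomial σ R) : D f = ∑ i, D (X i) * pderiv i f := by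
  set E : Derivation R (MvPolynomial σ R) (MvPolynomial σ R) := ∑ i, D (X i) • pderiv i
  have hE : ∀ g, E g = ∑ i, D (X i) * pderiv i g := fun g => by
    change Derivation.coeFnAddMonoidHom (∑ i, _) g = _
    rw [map_sum, Finset.sum_apply]
    rfl
  have hDE : D = E := derivation_ext fun j => by simp [hE, pderiv_X, Pi.single_apply]
  rw [← hE, ← hDE]

theorem IsHomogeneous.eq_sum_smul_X {p : MvPolynomial σ R} (hp : p.IsHomogeneous 1) :
    p = ∑ k, constantCoeff (pderiv k p) • X k := by
  have hconst : ∀ k, pderiv k p = C (constantCoeff (pderiv k p)) := fun k => by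
    rw [constantCoeff_eq]
    exact totalDegree_eq_zero_iff_eq_C.mp ((totalDegree_zero_iff_isHomogeneous σ).mpr hp.pderiv)
  calc p = ∑ k, X k * pderiv k p := by simpa using hp.sum_X_mul_pderiv.symm
    _ = _ := Finset.sum_congr rfl fun k _ => by rw [hconst k, smul_eq_C_mul, mul_comm]; simp

theorem IsHomogeneous.pderiv_eq_sum_hessian {Q : MvPolynomial σ R} (hQ : Q.IsHomogeneous 2)
    (j : σ) : pderiv j Q = ∑ k, hessian Q j k • X k :=
  (hQ.pderiv (i := j)).eq_sum_smul_X

theorem IsHomogeneous.eval_pderiv {Q : MvPolynomial σ R} (hQ : Q.IsHomogeneous 2) (x : σ → R)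
    (j : σ) : eval x (pderiv j Q) = (hessian Q *ᵥ x) j := by
  simp [hQ.pderiv_eq_sum_hessian, Matrix.mulVec, dotProduct]

theorem IsHomogeneous.two_mul_eval {Q : MvPolynomial σ R} (hQ : Q.IsHomogeneous 2) (x : σ → R) :
    2 * eval x Q = x ⬝ᵥ hessian Q *ᵥ x := by
  have h := congrArg (eval x) hQ.sum_X_mul_pderiv
  simp only [map_sum, map_mul, eval_X, hQ.eval_pderiv, map_nsmul] at h
  rw [dotProduct, h, two_mul, two_nsmul]

theorem sum_smul_pderiv_of_mul_hessian {Q Q' : MvPolynomial σ R} (hQ : Q.IsHomogeneous 2)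
    (hQ' : Q'.IsHomogeneous 2) {A : Matrix σ σ R} (hA : A * hessian Q' = hessian Q) (j : σ) :
    ∑ i, A j i • pderiv i Q' = pderiv j Q := by
  simp only [hQ.pderiv_eq_sum_hessian, hQ'.pderiv_eq_sum_hessian, ← hA, Matrix.mul_apply,
    Finset.smul_sum, smul_smul, Finset.sum_smul]
  exact Finset.sum_comm

theorem IsHomogeneous.eval_add_sub {K : Type*} [Field K] [CharZero K] {Q : MvPolynomial σ K}
    (hQ : Q.IsHomogeneous 2) (x y : σ → K) :
    eval (x + y) Q - eval x Q - eval y Q = x ⬝ᵥ hessian Q *ᵥ y := by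
  have hsymm : y ⬝ᵥ hessian Q *ᵥ x = x ⬝ᵥ hessian Q *ᵥ y := by
    rw [dotProduct_mulVec, ← Matrix.mulVec_transpose, (hessian_isSymm Q).eq, dotProduct_comm]
  have hxy := hQ.two_mul_eval (x + y)
  rw [Matrix.mulVec_add, add_dotProduct, dotProduct_add, dotProduct_add, hsymm,
    ← hQ.two_mul_eval, ← hQ.two_mul_eval] at hxy
  refine mul_left_cancel₀ (two_ne_zero (α := K)) ?_
  linear_combination hxy

end MvPolynomial

theorem commute_of_mul_mul_eq {M : Type*} [Monoid M] {m t a b c : M} (ht : IsUnit t)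
    (hb : IsUnit b) (ha : m * a * t = a) (hb' : m * b * t = b) (hc : c * b = a) :
    Commute m c := by
  refine hb.mul_left_inj.mp (ht.mul_left_inj.mp ?_)
  calc m * c * b * t = m * a * t := by rw [mul_assoc m c b, hc]
    _ = c * (m * b * t) := by rw [ha, hb', hc]
    _ = c * m * b * t := by simp only [mul_assoc]

open MvPolynomial

section PolynomialModel

variable (bV : Module.Basis κ ℚ V)

theorem embR_basis (i : κ) : embR bV (bV i) = X i := by
  simp [embR]

theorem embR_eq_sum [Fintype κ] (v : V) : embR bV v = ∑ j, bV.repr v j • X j := by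
  simp [embR, Finsupp.linearCombination_apply, Finsupp.sum_fintype]

theorem liftW_X (w : V ≃ₗ[ℚ] V) (i : κ) : liftW bV w (X i) = embR bV (w (bV i)) :=
  aeval_X _ _

theorem liftW_embR (w : V ≃ₗ[ℚ] V) (v : V) : liftW bV w (embR bV v) = embR bV (w v) := by
  have h : (liftW bV w).toLinearMap ∘ₗ embR bV = embR bV ∘ₗ (w : V →ₗ[ℚ] V) :=
    bV.ext fun i => by simp [embR_basis, liftW_X]
  exact LinearMap.congr_fun h v

theorem liftW_mul (w w' : V ≃ₗ[ℚ] V) : liftW bV (w * w') = (liftW bV w).comp (liftW bV w') :=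
  algHom_ext fun i => by simp [liftW_X, liftW_embR]

theorem liftW_one : liftW bV 1 = AlgHom.id ℚ (MvPolynomial κ ℚ) :=
  algHom_ext fun i => by simp [liftW_X, embR_basis]

theorem liftW_liftW_inv (w : V ≃ₗ[ℚ] V) (f : MvPolynomial κ ℚ) :
    liftW bV w (liftW bV w⁻¹ f) = f := by
  rw [← AlgHom.comp_apply, ← liftW_mul, mul_inv_cancel, liftW_one, AlgHom.id_apply]

theorem eval_liftW [Fintype κ] (w : V ≃ₗ[ℚ] V) (x : κ → ℚ) (f : MvPolynomial κ ℚ) :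
    eval x (liftW bV w f) = eval (x ᵥ* LinearMap.toMatrix bV bV w) f := by
  change aeval x (liftW bV w f) = aeval _ f
  rw [← AlgHom.comp_apply]
  congr 1
  refine algHom_ext fun i => ?_
  simp [liftW_X, embR_eq_sum, Matrix.vecMul, dotProduct, LinearMap.toMatrix_apply, mul_comm]

end PolynomialModel

section Derivations

variable {ψ : MvPolynomial κ ℚ → MvPolynomial κ ℚ}

def IsDerivFn.toDerivation (hψ : IsDerivFn ψ) :
    Derivation ℚ (MvPolynomial κ ℚ) (MvPolynomial κ ℚ) :=
  Derivation.mk' (IsLinearMap.mk' ψ hψ.1) fun f g => by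
    simp [hψ.2, smul_eq_mul, add_comm, mul_comm]

@[simp]
theorem IsDerivFn.coe_toDerivation (hψ : IsDerivFn ψ) : ⇑hψ.toDerivation = ψ := rfl

theorem Derivation.isDerivFn (D : Derivation ℚ (MvPolynomial κ ℚ) (MvPolynomial κ ℚ)) :
    IsDerivFn ⇑D :=
  ⟨⟨D.map_add, D.map_smul⟩, fun f g => by
    rw [D.leibniz, smul_eq_mul, smul_eq_mul, add_comm, mul_comm g]⟩

theorem IsDerivFn.ext {φ : MvPolynomial κ ℚ → MvPolynomial κ ℚ} (hψ : IsDerivFn ψ)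
    (hφ : IsDerivFn φ) (h : ∀ i, ψ (X i) = φ (X i)) : ψ = φ :=
  congrArg DFunLike.coe (derivation_ext (D₁ := hψ.toDerivation) (D₂ := hφ.toDerivation) h)

theorem IsDerivFn.actDer (bV : Module.Basis κ ℚ V) (w : V ≃ₗ[ℚ] V) (hψ : IsDerivFn ψ) :
    IsDerivFn (actDer bV w ψ) := by
  refine ⟨⟨fun f g => ?_, fun c f => ?_⟩, fun f g => ?_⟩ <;>
    simp only [_root_.actDer, map_add, map_smul, map_mul, hψ.1.map_add, hψ.1.map_smul, hψ.2,
      liftW_liftW_inv]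

theorem IsLinearMap.apply_embR [Fintype κ] (hψ : IsLinearMap ℚ ψ) (bV : Module.Basis κ ℚ V)
    (v : V) : ψ (embR bV v) = ∑ j, bV.repr v j • ψ (X j) := by
  rw [embR_eq_sum, ← IsLinearMap.mk'_apply hψ, map_sum]
  simp

end Derivations

section QuadraticForm

variable (bV : Module.Basis κ ℚ V) [Fintype κ] {Q : MvPolynomial κ ℚ}

theorem polyQuadForm_add_sub (hQ : Q.IsHomogeneous 2) (v u : V) :
    polyQuadForm bV Q (v + u) - polyQuadForm bV Q v - polyQuadForm bV Q u =
      ⇑(bV.repr v) ⬝ᵥ hessian Q *ᵥ ⇑(bV.repr u) := by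
  simp only [polyQuadForm, map_add, Finsupp.coe_add, ← hQ.eval_add_sub]

theorem NondegQuad.isUnit_hessian (hQ : Q.IsHomogeneous 2) (hnd : NondegQuad bV Q) :
    IsUnit (hessian Q) := by
  refine Matrix.mulVec_injective_iff_isUnit.mp fun c c' hcc' => ?_
  have hzero : hessian Q *ᵥ (c - c') = 0 := by rw [Matrix.mulVec_sub, hcc', sub_self]
  suffices h : bV.equivFun.symm (c - c') = 0 from
    sub_eq_zero.mp (bV.equivFun.symm.map_eq_zero_iff.mp h)
  refine hnd _ fun u => ?_
  rw [add_comm, sub_right_comm, polyQuadForm_add_sub bV hQ,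
    ← bV.equivFun_apply (bV.equivFun.symm _), LinearEquiv.apply_symm_apply, hzero, dotProduct_zero]

theorem hessian_conj_eq_of_liftW_eq (hQ : Q.IsHomogeneous 2) {w : V ≃ₗ[ℚ] V}
    (hw : liftW bV w Q = Q) :
    LinearMap.toMatrix bV bV w * hessian Q * (LinearMap.toMatrix bV bV w)ᵀ = hessian Q := by
  set M := LinearMap.toMatrix bV bV w
  have hpolar : ∀ x y, x ⬝ᵥ (M * hessian Q * Mᵀ) *ᵥ y = x ⬝ᵥ hessian Q *ᵥ y := fun x y => by
    have hQM : ∀ z, eval (z ᵥ* M) Q = eval z Q := fun z => by rw [← eval_liftW, hw]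
    rw [← hQ.eval_add_sub, ← hQM, ← hQM x, ← hQM y, Matrix.add_vecMul, hQ.eval_add_sub,
      ← Matrix.mulVec_mulVec, ← Matrix.mulVec_mulVec, Matrix.mulVec_transpose,
      Matrix.dotProduct_mulVec x M]
  exact Matrix.ext_of_single_vecMul fun i => dotProduct_eq _ _ fun y => by
    rw [← Matrix.dotProduct_mulVec, ← Matrix.dotProduct_mulVec, hpolar]

end QuadraticForm

section WeylGroup

variable (D : RootSystemData V)

theorem wThetaGroup_le_weylGroup {Θ : Finset V} (hΘ : Θ ⊆ D.Δ) : WThetaGroup D Θ ≤ WeylGroup D :=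
  Subgroup.closure_mono fun _ ⟨α, hα, hg⟩ =>
    ⟨α, D.pos_subset (D.simple_subset (hΘ hα)), hg⟩

theorem exists_reflection_mem_weylGroup {α : V} (hα : α ∈ D.Φ) :
    ∃ g ∈ WeylGroup D, IsReflectionOf D α g := by
  let s : V →ₗ[ℚ] V := LinearMap.id - (D.coroot α).smulRight α
  have hs : Function.Involutive s := fun x => by
    simp only [s, LinearMap.sub_apply, LinearMap.id_apply, LinearMap.smulRight_apply, map_sub,
      map_smul, D.coroot_self α hα]
    module
  exact ⟨LinearEquiv.ofInvolutive s hs, Subgroup.subset_closure ⟨α, hα, fun _ => rfl⟩, fun _ => rfl⟩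

theorem exists_eq_smul_of_commute_weylGroup {T : V →ₗ[ℚ] V}
    (hT : ∀ w ∈ WeylGroup D, ∀ v, T (w v) = w (T v)) {α : V} (hα : α ∈ D.Φ) :
    ∃ c : ℚ, T α = c • α := by
  obtain ⟨s, hsW, hs⟩ := exists_reflection_mem_weylGroup D hα
  have hsα : s α = -α := by rw [hs, D.coroot_self α hα]; module
  have h := hT s hsW α
  rw [hsα, map_neg, hs] at h
  refine ⟨D.coroot α (T α) / 2, ?_⟩
  linear_combination (norm := module) (-(1 / 2 : ℚ)) • h

end WeylGroup

section Transfer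

variable (bV : Module.Basis κ ℚ V)

theorem exists_equivariant_toMatrix_mul_hessian [Fintype κ] (D : RootSystemData V)
    {Q Q' : MvPolynomial κ ℚ} (hQ2 : Q.IsHomogeneous 2) (hQ2' : Q'.IsHomogeneous 2)
    (hQW : ∀ w ∈ WeylGroup D, liftW bV w Q = Q) (hQW' : ∀ w ∈ WeylGroup D, liftW bV w Q' = Q')
    (hQnd' : NondegQuad bV Q') :
    ∃ T : V →ₗ[ℚ] V, (∀ w ∈ WeylGroup D, ∀ v, T (w v) = w (T v)) ∧
      LinearMap.toMatrix bV bV T * hessian Q' = hessian Q := by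
  have hH' := hQnd'.isUnit_hessian bV hQ2'
  set C := hessian Q * (hessian Q')⁻¹
  have hC : C * hessian Q' = hessian Q :=
    Matrix.nonsing_inv_mul_cancel_right _ _ ((Matrix.isUnit_iff_isUnit_det _).mp hH')
  refine ⟨Matrix.toLin bV bV C, fun w hw v => ?_, by rwa [LinearMap.toMatrix_toLin]⟩
  have hM : IsUnit (LinearMap.toMatrix bV bV w)ᵀ := by
    rw [Matrix.isUnit_transpose, Matrix.isUnit_iff_isUnit_det, LinearMap.det_toMatrix]
    exact LinearEquiv.isUnit_det' w
  have hcomm := commute_of_mul_mul_eq hM hH' (hessian_conj_eq_of_liftW_eq bV hQ2 (hQW w hw))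
    (hessian_conj_eq_of_liftW_eq bV hQ2' (hQW' w hw)) hC
  have h : Matrix.toLin bV bV C ∘ₗ (w : V →ₗ[ℚ] V) = (w : V →ₗ[ℚ] V) ∘ₗ Matrix.toLin bV bV C :=
    (LinearMap.toMatrix bV bV).injective <| by
      rw [LinearMap.toMatrix_comp bV bV bV, LinearMap.toMatrix_comp bV bV bV,
        LinearMap.toMatrix_toLin]
      exact hcomm.eq.symm
  exact LinearMap.congr_fun h v

def transferDer (T : V →ₗ[ℚ] V) (ψ : MvPolynomial κ ℚ → MvPolynomial κ ℚ) :
    Derivation ℚ (MvPolynomial κ ℚ) (MvPolynomial κ ℚ) :=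
  mkDerivation ℚ fun i => ψ (embR bV (T (bV i)))

variable {bV} {T : V →ₗ[ℚ] V} {ψ : MvPolynomial κ ℚ → MvPolynomial κ ℚ}

theorem transferDer_embR (hψ : IsLinearMap ℚ ψ) (v : V) :
    transferDer bV T ψ (embR bV v) = ψ (embR bV (T v)) := by
  have h : (transferDer bV T ψ).toLinearMap ∘ₗ embR bV = IsLinearMap.mk' ψ hψ ∘ₗ embR bV ∘ₗ T :=
    bV.ext fun i => by simp [transferDer, embR_basis]
  exact LinearMap.congr_fun h v

theorem inLogDer_transferDer {I : Finset V} (hψ : InLogDer bV I ψ)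
    (hT : ∀ α ∈ I, ∃ c : ℚ, T α = c • α) : InLogDer bV I (transferDer bV T ψ) := by
  refine ⟨(transferDer bV T ψ).isDerivFn, fun α hα => ?_⟩
  obtain ⟨r, hr⟩ := hψ.2 α hα
  obtain ⟨c, hc⟩ := hT α hα
  refine ⟨c • r, ?_⟩
  rw [transferDer_embR hψ.1.1, hc, map_smul, hψ.1.1.map_smul, hr, smul_mul_assoc]

theorem actDer_transferDer (hψ : IsLinearMap ℚ ψ) {w : V ≃ₗ[ℚ] V}
    (hw : actDer bV w ψ = ψ) (hT : ∀ v, T (w⁻¹ v) = w⁻¹ (T v)) :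
    actDer bV w (transferDer bV T ψ) = transferDer bV T ψ := by
  refine ((transferDer bV T ψ).isDerivFn.actDer bV w).ext (transferDer bV T ψ).isDerivFn
    fun i => ?_
  calc actDer bV w (transferDer bV T ψ) (X i)
      = liftW bV w (ψ (liftW bV w⁻¹ (embR bV (T (bV i))))) := by
        rw [actDer, liftW_X, transferDer_embR hψ, hT, liftW_embR]
    _ = ψ (embR bV (T (bV i))) := congrFun hw _
    _ = transferDer bV T ψ (X i) := by simp [transferDer]

theorem transferDer_apply_eq [Fintype κ] (hψ : IsDerivFn ψ) {Q Q' : MvPolynomial κ ℚ}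
    (hQ2 : Q.IsHomogeneous 2) (hQ2' : Q'.IsHomogeneous 2)
    (hT : LinearMap.toMatrix bV bV T * hessian Q' = hessian Q) :
    transferDer bV T ψ Q' = ψ Q := by
  have hX : ∀ i, transferDer bV T ψ (X i) = ∑ j, LinearMap.toMatrix bV bV T j i • ψ (X j) :=
    fun i => by simp [transferDer, hψ.1.apply_embR, LinearMap.toMatrix_apply]
  rw [derivation_eq_sum_mul_pderiv, ← hψ.coe_toDerivation, derivation_eq_sum_mul_pderiv]
  simp only [hψ.coe_toDerivation, hX, Finset.sum_mul, smul_mul_assoc]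
  rw [Finset.sum_comm]
  refine Finset.sum_congr rfl fun j _ => ?_
  rw [← sum_smul_pderiv_of_mul_hessian hQ2 hQ2' hT j, Finset.mul_sum]
  exact Finset.sum_congr rfl fun i _ => (mul_smul_comm _ _ _).symm

end Transfer

def aIdealTheta (D : RootSystemData V) (bV : Module.Basis κ ℚ V) (Θ I : Finset V)
    (Q : MvPolynomial κ ℚ) : Set (MvPolynomial κ ℚ) :=
  {f | ∃ ψ, InLogDer bV I ψ ∧ (∀ w ∈ WThetaGroup D Θ, actDer bV w ψ = ψ) ∧ ψ Q = f}

theorem aIdealTheta_subset [Fintype κ] (D : RootSystemData V) (bV : Module.Basis κ ℚ V)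
    {Θ I : Finset V} (hΘ : Θ ⊆ D.Δ) (hI : I ⊆ D.Φ) {Q Q' : MvPolynomial κ ℚ}
    (hQ2 : Q.IsHomogeneous 2) (hQ2' : Q'.IsHomogeneous 2)
    (hQW : ∀ w ∈ WeylGroup D, liftW bV w Q = Q) (hQW' : ∀ w ∈ WeylGroup D, liftW bV w Q' = Q')
    (hQnd' : NondegQuad bV Q') :
    aIdealTheta D bV Θ I Q ⊆ aIdealTheta D bV Θ I Q' := by
  obtain ⟨T, hTW, hTQ⟩ := exists_equivariant_toMatrix_mul_hessian bV D hQ2 hQ2' hQW hQW' hQnd'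
  rintro _ ⟨ψ, hψ, hψW, rfl⟩
  refine ⟨transferDer bV T ψ, inLogDer_transferDer hψ fun α hα => ?_, fun w hw => ?_,
    transferDer_apply_eq hψ.1 hQ2 hQ2' hTQ⟩
  · exact exists_eq_smul_of_commute_weylGroup D hTW (hI hα)
  · have hw' := (WeylGroup D).inv_mem (wThetaGroup_le_weylGroup D hΘ hw)
    exact actDer_transferDer hψ.1.1 (hψW w hw) (hTW _ hw')

/-- Let `Θ ⊆ Δ` and let `I` be a `Θ`-ideal in `Φ⁺`. If `Q` and `Q'`
are two `W`-invariant elements of `Sym²(V)` whose associated symmetric bilinear forms on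
`V` are nondegenerate, then the ideals of `R^{W_Θ}` defined by them coincide:
`{ψ(Q) : ψ ∈ D(A_I)^{W_Θ}} = {ψ(Q') : ψ ∈ D(A_I)^{W_Θ}}`; i.e. `a(I)_Θ` does not
depend on the choice of `W`-invariant nondegenerate quadratic form. -/
theorem aIdealTheta_independent_of_quadForm
    (D : RootSystemData V) (bV : Module.Basis κ ℚ V)
    (Θ : Finset V) (hΘ : Θ ⊆ D.Δ)
    (I : Finset V) (hI : IsThetaIdealOf D.Pos Θ I)
    (Q Q' : MvPolynomial κ ℚ)
    (hQ2 : Q.IsHomogeneous 2) (hQ2' : Q'.IsHomogeneous 2)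
    (hQW : ∀ w ∈ WeylGroup D, liftW bV w Q = Q)
    (hQW' : ∀ w ∈ WeylGroup D, liftW bV w Q' = Q')
    (hQnd : NondegQuad bV Q) (hQnd' : NondegQuad bV Q') :
    {f : MvPolynomial κ ℚ | ∃ ψ, InLogDer bV I ψ ∧
        (∀ w ∈ WThetaGroup D Θ, actDer bV w ψ = ψ) ∧ ψ Q = f} =
      {f : MvPolynomial κ ℚ | ∃ ψ, InLogDer bV I ψ ∧
        (∀ w ∈ WThetaGroup D Θ, actDer bV w ψ = ψ) ∧ ψ Q' = f} := by
  have : FiniteDimensional ℚ V := ⟨⟨D.Φ, D.span_eq_top⟩⟩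
  have : Fintype κ := FiniteDimensional.fintypeBasisIndex bV
  have hIΦ : I ⊆ D.Φ := hI.1.1.trans D.pos_subset
  exact (aIdealTheta_subset D bV hΘ hIΦ hQ2 hQ2' hQW hQW' hQnd').antisymm
    (aIdealTheta_subset D bV hΘ hIΦ hQ2' hQ2 hQW' hQW hQnd)

end
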